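/- Let n ≥ 2 and let A = (a_{i,j}) be an n×n matrix with entries in {0,1} such that row n has exactly two nonzero entries, located in columns n−1 and n. Let A′ be the (n−1)×(n−1) matrix obtained from A by replacing column n−1 by the column with entries a′_{j,n−1} = max(a_{j,n−1}, a_{j,n}) for j ∈ {1,…,n−1} and then deleting row n and column n (the bicontraction of A at row n). Let Y₃ be the set of all permutations σ ∈ S_n with a_{i,σ(i)} = 1 for all i and with a_{σ⁻¹(c′),σ(n)} = 1, where c′ is the element of {n−1,n} other than σ(n). Then 2·perm(A′) = 2·perm(A) − |Y₃|. In particular, if no row j ∈ {1,…,n−1} has a_{j,n−1} = a_{j,n} = 1, then perm(A′) = perm(A). -/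

import Mathlib

open SimpleGraph

namespace PaperMM

/-- A (finite, simple) graph bundled with its vertex type. -/
structure Graph : Type 1 where
  V : Type
  adj : SimpleGraph V

/-- `G` has a perfect matching. -/
def HasPM {V : Type} (G : SimpleGraph V) : Prop :=
  ∃ M : G.Subgraph, M.IsPerfectMatching

/-- `X ⊆ V(G)` is conformal: `G − X` has a perfect matching. -/
def ConformalSet {V : Type} (G : SimpleGraph V) (X : Set V) : Prop :=
  HasPM (G.induce Xᶜ)

/-- The result of bicontracting the degree-2 vertex `v` with neighbours `u₀, u₁`:
the three vertices are identified into (the vertex previously called) `v`,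
loops and parallel edges being suppressed. -/
def bicontractAt {V : Type} (G : SimpleGraph V) (v u₀ u₁ : V) :
    SimpleGraph {x : V // x ≠ u₀ ∧ x ≠ u₁} where
  Adj a b :=
    (a.1 ≠ v ∧ b.1 ≠ v ∧ G.Adj a.1 b.1) ∨
    (a.1 = v ∧ b.1 ≠ v ∧ (G.Adj b.1 u₀ ∨ G.Adj b.1 u₁)) ∨
    (b.1 = v ∧ a.1 ≠ v ∧ (G.Adj a.1 u₀ ∨ G.Adj a.1 u₁))
  symm := by
    constructor
    rintro a b (⟨h1, h2, h3⟩ | ⟨h1, h2, h3⟩ | ⟨h1, h2, h3⟩)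
    · exact Or.inl ⟨h2, h1, h3.symm⟩
    · exact Or.inr (Or.inr ⟨h1, h2, h3⟩)
    · exact Or.inr (Or.inl ⟨h1, h2, h3⟩)
  loopless := by
    constructor
    rintro a (⟨h1, _h2, h3⟩ | ⟨h1, h2, _h3⟩ | ⟨h1, h2, _h3⟩)
    · exact G.irrefl h3
    · exact h2 h1
    · exact h2 h1

/-- `H` is obtained from `G` by a single bicontraction of a vertex of degree two. -/
def Bicontract (G H : Graph) : Prop :=
  ∃ v u₀ u₁ : G.V, u₀ ≠ u₁ ∧ G.adj.neighborSet v = {u₀, u₁} ∧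
    Nonempty (H.adj ≃g bicontractAt G.adj v u₀ u₁)

/-- `H` is a matching minor of `G`: a graph isomorphic to `H` can be obtained from
a conformal subgraph of `G` by repeated bicontractions. -/
def IsMatchingMinor (H G : Graph) : Prop :=
  ∃ (H' : G.adj.Subgraph) (K : Graph),
    ConformalSet G.adj H'.verts ∧
    Relation.ReflTransGen Bicontract ⟨↥H'.verts, H'.coe⟩ K ∧
    Nonempty (H.adj ≃g K.adj)

/-- The edge cut `∂(X)`: all edges of `G` with exactly one endpoint in `X`. -/
def edgeCut {V : Type} (G : SimpleGraph V) (X : Set V) : Set (Sym2 V) :=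
  {e | e ∈ G.edgeSet ∧ ∃ a b : V, e = s(a, b) ∧ a ∈ X ∧ b ∉ X}

/-- `∂(X)` is a tight cut: every perfect matching contains exactly one of its edges. -/
def IsTightCut {V : Type} (G : SimpleGraph V) (X : Set V) : Prop :=
  ∀ M : G.Subgraph, M.IsPerfectMatching → (M.edgeSet ∩ edgeCut G X).ncard = 1

/-- `G` is matching covered: connected and every edge lies in a perfect matching. -/
def MatchingCovered {V : Type} (G : SimpleGraph V) : Prop :=
  G.Connected ∧ ∀ e ∈ G.edgeSet, ∃ M : G.Subgraph, M.IsPerfectMatching ∧ e ∈ M.edgeSet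

/-- `(V₁, V₂)` is a bipartition of `G` into two independent sets. -/
def IsBipartition {V : Type} (G : SimpleGraph V) (V₁ V₂ : Set V) : Prop :=
  V₁ ∪ V₂ = Set.univ ∧ V₁ ∩ V₂ = ∅ ∧
    ∀ a b : V, G.Adj a b → ((a ∈ V₁ ∧ b ∈ V₂) ∨ (a ∈ V₂ ∧ b ∈ V₁))

def IsBipartiteGraph {V : Type} (G : SimpleGraph V) : Prop :=
  ∃ V₁ V₂ : Set V, IsBipartition G V₁ V₂

/-- A brace: a bipartite matching covered graph with no non-trivial tight cut. -/
def IsBrace {V : Type} (G : SimpleGraph V) : Prop :=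
  IsBipartiteGraph G ∧ MatchingCovered G ∧
    ¬ ∃ X : Set V, IsTightCut G X ∧ 2 ≤ X.ncard ∧ 2 ≤ Xᶜ.ncard

/-- A perfect matching decomposition: a cubic tree `tree` together with a bijection
from its leaves to the vertices of `G`. -/
structure PMDecomp {V : Type} (G : SimpleGraph V) where
  T : Type
  tree : SimpleGraph T
  isTree : tree.IsTree
  cubic : ∀ t : T, (tree.neighborSet t).ncard = 1 ∨ (tree.neighborSet t).ncard = 3
  leafEquiv : {t : T // (tree.neighborSet t).ncard = 1} ≃ V

/-- The side of the partition of `V(G)` induced by the tree edge `{t₁, t₂}`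
corresponding to `t₁`. -/
def PMDecomp.sideSet {V : Type} {G : SimpleGraph V} (D : PMDecomp G) (t₁ t₂ : D.T) :
    Set V :=
  {v | (D.tree.deleteEdges {s(t₁, t₂)}).Reachable t₁ (D.leafEquiv.symm v).1}

/-- The matching porosity of `X`: the maximum number of edges of `∂(X)` in a
perfect matching of `G`. -/
noncomputable def matchingPorosity {V : Type} (G : SimpleGraph V) (X : Set V) : ℕ :=
  sSup {n | ∃ M : G.Subgraph, M.IsPerfectMatching ∧ n = (M.edgeSet ∩ edgeCut G X).ncard}

/-- The width of a perfect matching decomposition. -/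
noncomputable def PMDecomp.width {V : Type} {G : SimpleGraph V} (D : PMDecomp G) : ℕ :=
  sSup {n | ∃ t₁ t₂ : D.T, D.tree.Adj t₁ t₂ ∧ n = matchingPorosity G (D.sideSet t₁ t₂)}

/-- The perfect matching width of `G`. -/
noncomputable def pmw {V : Type} (G : SimpleGraph V) : ℕ :=
  sInf {w | ∃ D : PMDecomp G, D.width ≤ w}

/-! ### Concrete graphs -/

/-- The `(n × m)`-grid. -/
def gridGraph (n m : ℕ) : SimpleGraph (Fin n × Fin m) :=
  SimpleGraph.fromRel (fun p q =>
    (p.1 = q.1 ∧ p.2.1 + 1 = q.2.1) ∨ (p.2 = q.2 ∧ p.1.1 + 1 = q.1.1))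

/-- The single-crossing matching grid of order `k`: the `(2k × 2k)`-grid whose
central 4-cycle (`(k,k),(k,k+1),(k+1,k+1),(k+1,k)` in 1-based coordinates) is
identified with a 4-cycle of `K_{3,3}`; `Sum.inr 0` and `Sum.inr 1` are the two
remaining vertices of `K_{3,3}`. -/
def singleCrossingMatchingGrid (k : ℕ) :
    SimpleGraph ((Fin (2*k) × Fin (2*k)) ⊕ Fin 2) :=
  SimpleGraph.fromRel (fun x y =>
    (∃ p q : Fin (2*k) × Fin (2*k), x = Sum.inl p ∧ y = Sum.inl q ∧
      ((p.1 = q.1 ∧ p.2.1 + 1 = q.2.1) ∨ (p.2 = q.2 ∧ p.1.1 + 1 = q.1.1))) ∨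
    (∃ p : Fin (2*k) × Fin (2*k), x = Sum.inl p ∧ y = Sum.inr 0 ∧
      ((p.1.1 = k - 1 ∧ p.2.1 = k) ∨ (p.1.1 = k ∧ p.2.1 = k - 1))) ∨
    (∃ p : Fin (2*k) × Fin (2*k), x = Sum.inl p ∧ y = Sum.inr 1 ∧
      ((p.1.1 = k - 1 ∧ p.2.1 = k - 1) ∨ (p.1.1 = k ∧ p.2.1 = k))) ∨
    (x = Sum.inr 0 ∧ y = Sum.inr 1))

/-- The inside-out single-crossing matching grid of order `k`: the `(2k × 2k)`-grid
together with the two remaining vertices of a `K_{3,3}` whose chosen 4-cycle has been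
identified with the four corners (its edges being deleted). -/
def insideOutSingleCrossingMatchingGrid (k : ℕ) :
    SimpleGraph ((Fin (2*k) × Fin (2*k)) ⊕ Fin 2) :=
  SimpleGraph.fromRel (fun x y =>
    (∃ p q : Fin (2*k) × Fin (2*k), x = Sum.inl p ∧ y = Sum.inl q ∧
      ((p.1 = q.1 ∧ p.2.1 + 1 = q.2.1) ∨ (p.2 = q.2 ∧ p.1.1 + 1 = q.1.1))) ∨
    (∃ p : Fin (2*k) × Fin (2*k), x = Sum.inl p ∧ y = Sum.inr 0 ∧
      ((p.1.1 = 0 ∧ p.2.1 = 2*k - 1) ∨ (p.1.1 = 2*k - 1 ∧ p.2.1 = 0))) ∨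
    (∃ p : Fin (2*k) × Fin (2*k), x = Sum.inl p ∧ y = Sum.inr 1 ∧
      ((p.1.1 = 0 ∧ p.2.1 = 0) ∨ (p.1.1 = 2*k - 1 ∧ p.2.1 = 2*k - 1))) ∨
    (x = Sum.inr 0 ∧ y = Sum.inr 1))

/-- The cylindrical matching grid `CG_k` of order `k` (0-based coordinates:
vertex `(i, j)` is `v_{j+1}^{i+1}` of the paper). -/
def cylindricalMatchingGrid (k : ℕ) : SimpleGraph (Fin k × Fin (4*k)) :=
  SimpleGraph.fromRel (fun x y =>
    (x.1 = y.1 ∧ (x.2.1 + 1) % (4*k) = y.2.1) ∨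
    (x.1.1 + 1 = y.1.1 ∧ x.2.1 % 4 = 0 ∧ x.2.1 + 1 = y.2.1) ∨
    (y.1.1 + 1 = x.1.1 ∧ x.2.1 % 4 = 2 ∧ x.2.1 + 1 = y.2.1))

/-- The edges of the canonical matching of `CG_k`. -/
def cmgCanonicalEdges (k : ℕ) : Set (Sym2 (Fin k × Fin (4*k))) :=
  {e | ∃ x y : Fin k × Fin (4*k), e = s(x, y) ∧ x.1 = y.1 ∧
        x.2.1 % 2 = 0 ∧ x.2.1 + 1 = y.2.1}

/-- The edges of the alternating matching of `CG_k` (for `k` even): the canonical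
matching with `M ∩ E(C_i)` replaced by `E(C_i) ∖ M` on every odd (1-based) cycle. -/
def cmgAlternatingEdges (k : ℕ) : Set (Sym2 (Fin k × Fin (4*k))) :=
  {e | ∃ x y : Fin k × Fin (4*k), e = s(x, y) ∧ x.1 = y.1 ∧
        (x.2.1 + 1) % (4*k) = y.2.1 ∧ (x.1.1 + x.2.1) % 2 = 1}

/-- The cylindrical single-crossing grid of order `h`: `CG_{4h}` plus the two
crossing edges `v^1_1 v^1_{8h+4}` and `v^1_{4h+1} v^1_{12h+4}`. -/
def cylindricalSingleCrossingGrid (h : ℕ) :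
    SimpleGraph (Fin (4*h) × Fin (4*(4*h))) :=
  cylindricalMatchingGrid (4*h) ⊔ SimpleGraph.fromRel (fun x y =>
    x.1.1 = 0 ∧ y.1.1 = 0 ∧
      ((x.2.1 = 0 ∧ y.2.1 = 8*h + 3) ∨ (x.2.1 = 4*h ∧ y.2.1 = 12*h + 3)))

/-- The cylindrical single-jump grid of order `k`: `CG_k` plus the edge `v^k_1 v^1_2`. -/
def cylindricalSingleJumpGrid (k : ℕ) : SimpleGraph (Fin k × Fin (4*k)) :=
  cylindricalMatchingGrid k ⊔ SimpleGraph.fromRel (fun x y =>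
    x.1.1 = k - 1 ∧ x.2.1 = 0 ∧ y.1.1 = 0 ∧ y.2.1 = 1)

/-- The shallow vortex matching grid `SVMG_k` of order `k`. -/
def shallowVortexMatchingGrid (k : ℕ) : SimpleGraph (Fin (2*k) × Fin (8*k)) :=
  SimpleGraph.fromRel (fun x y =>
    (x.1 = y.1 ∧ (x.2.1 + 1) % (8*k) = y.2.1) ∨
    (x.1.1 + 1 = y.1.1 ∧ x.2.1 % 4 = 0 ∧ x.2.1 + 1 = y.2.1) ∨
    (y.1.1 + 1 = x.1.1 ∧ x.2.1 % 4 = 2 ∧ x.2.1 + 1 = y.2.1) ∨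
    (x.1.1 = 0 ∧ y.1.1 = 0 ∧ x.2.1 % 4 = 1 ∧ (x.2.1 + 5) % (8*k) = y.2.1))

/-- The refined vortex `RV_k` of order `k`. -/
def refinedVortex (k : ℕ) : SimpleGraph (Fin (2*k) × Fin (4*k)) :=
  SimpleGraph.fromRel (fun x y =>
    (x.1 = y.1 ∧ (x.2.1 + 1) % (4*k) = y.2.1) ∨
    (x.1.1 + 1 = y.1.1 ∧ x.2 = y.2) ∨
    (x.1.1 = 0 ∧ y.1.1 = 0 ∧ x.2.1 % 4 = 1 ∧ (x.2.1 + 3) % (4*k) = y.2.1))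

/-- The (ordinary) single-crossing grid of order `n`: the `(2n × 2n)`-grid plus the
two crossing edges `{(n,n),(n+1,n+1)}` and `{(n,n+1),(n+1,n)}` (1-based). -/
def singleCrossingGrid (n : ℕ) : SimpleGraph (Fin (2*n) × Fin (2*n)) :=
  gridGraph (2*n) (2*n) ⊔ SimpleGraph.fromRel (fun p q =>
    (p.1.1 = n - 1 ∧ p.2.1 = n - 1 ∧ q.1.1 = n ∧ q.2.1 = n) ∨
    (p.1.1 = n - 1 ∧ p.2.1 = n ∧ q.1.1 = n ∧ q.2.1 = n - 1))

/-! ### M-conformality -/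

/-- `X` is `M`-conformal: every vertex outside `X` is matched by `M` to a vertex
outside `X`, i.e. `M ∩ E(G − X)` is a perfect matching of `G − X`. -/
def MConformalSet {V : Type} {G : SimpleGraph V} (M : G.Subgraph) (X : Set V) : Prop :=
  ∀ v ∈ Xᶜ, ∃ w ∈ Xᶜ, M.Adj v w

/-- A walk is internally `M`-conformal: it alternates between edges outside `M`
and edges of `M`, starting and ending with edges not in `M`. -/
def InternallyMConformal {V : Type} {G : SimpleGraph V} (M : G.Subgraph)
    {a b : V} (P : G.Walk a b) : Prop :=
  ∀ (i : ℕ) (h : i < P.edges.length), (P.edges.get ⟨i, h⟩ ∈ M.edgeSet ↔ i % 2 = 1)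

/-! ### Subdivisions -/

/-- A model of a subdivision of `H` inside `B`: branch vertices together with
internally disjoint paths representing the edges of `H`. -/
structure SubdivisionModel {V U : Type} (B : SimpleGraph V) (H : SimpleGraph U) where
  branch : U → V
  branch_inj : Function.Injective branch
  path : ∀ ⦃u w : U⦄, H.Adj u w → B.Walk (branch u) (branch w)
  path_isPath : ∀ ⦃u w : U⦄ (h : H.Adj u w), (path h).IsPath
  path_symm : ∀ ⦃u w : U⦄ (h : H.Adj u w), path h.symm = (path h).reverse
  branch_meet : ∀ ⦃u w : U⦄ (h : H.Adj u w) (z : U),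
      branch z ∈ (path h).support → z = u ∨ z = w
  path_disjoint : ∀ ⦃u w u' w' : U⦄ (h : H.Adj u w) (h' : H.Adj u' w'),
      s(u, w) ≠ s(u', w') → ∀ x : V, x ∈ (path h).support → x ∈ (path h').support →
        (x = branch u ∨ x = branch w) ∧ (x = branch u' ∨ x = branch w')

/-- The vertices of the subdivision in the host graph. -/
def SubdivisionModel.verts {V U : Type} {B : SimpleGraph V} {H : SimpleGraph U}
    (S : SubdivisionModel B H) : Set V :=
  {x | ∃ u w : U, ∃ h : H.Adj u w, x ∈ (S.path h).support}

/-- The edges of the subdivision in the host graph. -/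
def SubdivisionModel.edges' {V U : Type} {B : SimpleGraph V} {H : SimpleGraph U}
    (S : SubdivisionModel B H) : Set (Sym2 V) :=
  {e | ∃ u w : U, ∃ h : H.Adj u w, e ∈ (S.path h).edges}

/-- A model of a bisubdivision: every edge of `H` is replaced by a path of odd
length (i.e. every edge is subdivided an even number of times). -/
structure BisubdivisionModel {V U : Type} (B : SimpleGraph V) (H : SimpleGraph U)
    extends SubdivisionModel B H where
  path_odd : ∀ ⦃u w : U⦄ (h : H.Adj u w), Odd (path h).length

/-- `M` contains the canonical matching of the (bi)subdivision `S` of `CG_N`: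
`M ∩ E(W)` is a perfect matching of `W` in which every branch vertex is matched
along the subdivided image of the canonical-matching edge at the corresponding
grid vertex. -/
def ContainsCanonical {V : Type} {B : SimpleGraph V} {N : ℕ}
    (S : SubdivisionModel B (cylindricalMatchingGrid N)) (M : B.Subgraph) : Prop :=
  (∀ x ∈ S.verts, ∃ y ∈ S.verts, M.Adj x y ∧ s(x, y) ∈ S.edges') ∧
  (∀ (u : Fin N × Fin (4*N)) (y : V), M.Adj (S.branch u) y →
    ∃ w : Fin N × Fin (4*N), ∃ h : (cylindricalMatchingGrid N).Adj u w,
      s(u, w) ∈ cmgCanonicalEdges N ∧ s(S.branch u, y) ∈ (S.path h).edges)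

/-- The vertex set, in the host graph, of the subdivided image of the `j`-th
(0-based) concentric cycle of `CG_N`. -/
def cycVerts {V : Type} {B : SimpleGraph V} {N : ℕ}
    (S : SubdivisionModel B (cylindricalMatchingGrid N)) (j : ℕ) : Set V :=
  {x | ∃ u w : Fin N × Fin (4*N), ∃ h : (cylindricalMatchingGrid N).Adj u w,
      u.1.1 = j ∧ w.1.1 = j ∧ x ∈ (S.path h).support}

/-! ### Separations, minors, connectivity -/

/-- `(A, B)` is a separation of `G`. -/
def IsSeparation {V : Type} (G : SimpleGraph V) (A B : Set V) : Prop :=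
  A ∪ B = Set.univ ∧ ∀ a b : V, G.Adj a b → a ∈ A \ B → b ∉ B \ A

/-- `H` is a minor of `G` (branch-set model). -/
def IsMinor {U V : Type} (H : SimpleGraph U) (G : SimpleGraph V) : Prop :=
  ∃ φ : U → Set V,
    (∀ u, (φ u).Nonempty) ∧
    (∀ u, ∀ x, ∀ hx : x ∈ φ u, ∀ y, ∀ hy : y ∈ φ u,
      (G.induce (φ u)).Reachable ⟨x, hx⟩ ⟨y, hy⟩) ∧
    (Pairwise fun u w => Disjoint (φ u) (φ w)) ∧
    (∀ u w : U, H.Adj u w → ∃ x ∈ φ u, ∃ y ∈ φ w, G.Adj x y)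

/-- `G` is quasi-4-connected: 3-connected and every separation of order 3 has a
side containing at most one extra vertex. -/
def QuasiFourConnected {V : Type} (G : SimpleGraph V) : Prop :=
  (4 ≤ Nat.card V ∧
    ∀ A B : Set V, IsSeparation G A B → (A ∩ B).ncard ≤ 2 → A ⊆ B ∨ B ⊆ A) ∧
  (∀ A B : Set V, IsSeparation G A B → (A ∩ B).ncard = 3 →
    (A \ B).ncard ≤ 1 ∨ (B \ A).ncard ≤ 1)

/-! ### Walls -/

/-- The `(2n × n)`-grid with every odd edge of every odd column and every even edge
of every even column deleted (1-based parities). -/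
def preWall (n : ℕ) : SimpleGraph (Fin (2*n) × Fin n) :=
  SimpleGraph.fromRel (fun p q =>
    (p.1 = q.1 ∧ p.2.1 + 1 = q.2.1) ∨
    (p.2 = q.2 ∧ p.1.1 + 1 = q.1.1 ∧ ¬ p.1.1 % 2 = p.2.1 % 2))

/-- The vertices of the elementary `n`-wall: all vertices of `preWall n` of degree
at least two. -/
def elementaryWallVerts (n : ℕ) : Set (Fin (2*n) × Fin n) :=
  {v | 2 ≤ ((preWall n).neighborSet v).ncard}

/-- The elementary `n`-wall. -/
def elementaryWall (n : ℕ) : SimpleGraph ↥(elementaryWallVerts n) :=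
  (preWall n).induce (elementaryWallVerts n)

/-- The vertices on the perimeter of the elementary `n`-wall. -/
def wallPerimSet (n : ℕ) : Set (Fin (2*n) × Fin n) :=
  {v | v.1.1 = 0 ∨ v.1.1 = 2*n - 1 ∨ v.2.1 = 0 ∨ v.2.1 = n - 1}

/-- The (1-based) index of the concentric cycle of the centred layering of the
elementary `n`-wall containing a given vertex. -/
def wallRingIdx (n : ℕ) (v : Fin (2*n) × Fin n) : ℕ :=
  max ((if v.1.1 < n then n - 1 - v.1.1 else v.1.1 - n) / 2)
      (if v.2.1 < n / 2 then n / 2 - 1 - v.2.1 else v.2.1 - n / 2) + 1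

/-- The vertex set, in the host graph, of the `r`-th concentric cycle of a wall
given by a subdivision model. -/
def wallRingVertsG {V : Type} {G : SimpleGraph V} {n : ℕ}
    (S : SubdivisionModel G (elementaryWall n)) (r : ℕ) : Set V :=
  {x | ∃ u w, ∃ h : (elementaryWall n).Adj u w,
      wallRingIdx n u.1 = r ∧ wallRingIdx n w.1 = r ∧ x ∈ (S.path h).support}

/-- The vertex set, in the host graph, of the union of the first `r` concentric
cycles of a wall given by a subdivision model. -/
def wallInnerVertsG {V : Type} {G : SimpleGraph V} {n : ℕ}
    (S : SubdivisionModel G (elementaryWall n)) (r : ℕ) : Set V :=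
  {x | ∃ u w, ∃ h : (elementaryWall n).Adj u w,
      wallRingIdx n u.1 = wallRingIdx n w.1 ∧ wallRingIdx n u.1 ≤ r ∧
      x ∈ (S.path h).support}

/-- The vertex set, in the host graph, of the perimeter of a wall given by a
subdivision model. -/
def wallPerimVertsG {V : Type} {G : SimpleGraph V} {n : ℕ}
    (S : SubdivisionModel G (elementaryWall n)) : Set V :=
  {x | ∃ u w, ∃ h : (elementaryWall n).Adj u w,
      u.1 ∈ wallPerimSet n ∧ w.1 ∈ wallPerimSet n ∧ x ∈ (S.path h).support}

/-- The (1-based) index of the concentric cycle of the centred layering of the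
`(n × n)`-grid (`n` even) containing a given vertex. -/
def gridRing (n : ℕ) (p : Fin n × Fin n) : ℕ :=
  max (if p.1.1 < n / 2 then n / 2 - 1 - p.1.1 else p.1.1 - n / 2)
      (if p.2.1 < n / 2 then n / 2 - 1 - p.2.1 else p.2.1 - n / 2) + 1

/-! ### Matrices and permanents -/

/-- The permanent of an `n × n` matrix of naturals. -/
def perm (n : ℕ) (A : Matrix (Fin n) (Fin n) ℕ) : ℕ :=
  ∑ σ : Equiv.Perm (Fin n), ∏ i : Fin n, A i (σ i)

/-- The bipartite graph `B(A)` associated with a 0/1 matrix `A`: two copies of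
`{1,…,n}`, with `uᵢ` adjacent to `wⱼ` iff `A i j = 1`. -/
def matrixGraph (n : ℕ) (A : Matrix (Fin n) (Fin n) ℕ) :
    SimpleGraph (Fin n ⊕ Fin n) :=
  SimpleGraph.fromRel (fun x y => ∃ i j : Fin n, x = Sum.inl i ∧ y = Sum.inr j ∧ A i j = 1)

/-- The last index of `Fin n` (row/column `n`). -/
def lastIdx (n : ℕ) (_hn : 2 ≤ n) : Fin n := ⟨n - 1, by omega⟩

/-- The second-to-last index of `Fin n` (row/column `n − 1`). -/
def sndIdx (n : ℕ) (_hn : 2 ≤ n) : Fin n := ⟨n - 2, by omega⟩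

/-- The bicontraction of `A` at its last row: replace column `n−1` by the entrywise
maximum of columns `n−1` and `n`, then delete row `n` and column `n`. -/
def bicontractMatrix (n : ℕ) (hn : 2 ≤ n) (A : Matrix (Fin n) (Fin n) ℕ) :
    Matrix (Fin (n-1)) (Fin (n-1)) ℕ :=
  fun j i =>
    if (i : ℕ) = n - 2 then
      max (A (Fin.castLE (Nat.sub_le n 1) j) (sndIdx n hn))
          (A (Fin.castLE (Nat.sub_le n 1) j) (lastIdx n hn))
    else A (Fin.castLE (Nat.sub_le n 1) j) (Fin.castLE (Nat.sub_le n 1) i)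

end PaperMM

/-!
Write `A₀` for `A` without its last row and column, and `A₀[w]` for `A₀` with its last column
replaced by `w`. Expanding the permanent along the last row of `A`, whose only ones sit in columns
`n − 1` and `n`, gives `perm A = perm A₀[u] + perm A₀[v]`, where `u` and `v` are the truncated
columns `n − 1` and `n` of `A`; the bicontraction is `A′ = A₀[u ⊔ v]`. The permanent is additive
in a column and `u ⊔ v + u ⊓ v = u + v`, so `perm A′ + perm A₀[u ⊓ v] = perm A`. Finally, splitting
`σ` into `σ(n) ∈ {n − 1, n}` and a permutation of the remaining indices identifies `Y₃` with two
copies of the permutations supported by the 0/1 matrix `A₀[u ⊓ v]`, so `|Y₃| = 2 perm A₀[u ⊓ v]`;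
and `u ⊓ v = 0` when no row has ones in both columns.
-/

namespace PaperMM

open Equiv Finset

section Decompose

variable {m : ℕ}

def decomposeLast : Perm (Fin (m + 1)) ≃ Fin (m + 1) × Perm (Fin m) :=
  ((permCongr finSuccEquivLast).trans Perm.decomposeOption).trans
    (prodCongr finSuccEquivLast.symm (Equiv.refl _))

@[simp] lemma decomposeLast_symm_apply_last (p : Fin (m + 1)) (τ : Perm (Fin m)) :
    decomposeLast.symm (p, τ) (Fin.last m) = p := by
  simp [decomposeLast, permCongr_def]

@[simp] lemma decomposeLast_symm_apply_castSucc (p : Fin (m + 1)) (τ : Perm (Fin m))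
    (j : Fin m) :
    decomposeLast.symm (p, τ) j.castSucc = swap (Fin.last m) p (τ j).castSucc := by
  have := DFunLike.congr_fun (trans_swap_trans_symm none (finSuccEquivLast p) finSuccEquivLast)
      (τ j).castSucc
  simp only [trans_apply, finSuccEquivLast_castSucc, symm_apply_apply,
    finSuccEquivLast_symm_none] at this
  simp [decomposeLast, permCongr_def, finSuccEquivLast_castSucc, this]

lemma decomposeLast_symm_inv_apply (p : Fin (m + 1)) (τ : Perm (Fin m)) (c : Fin m) :
    (decomposeLast.symm (p, τ))⁻¹ (swap (Fin.last m) p c.castSucc) = (τ⁻¹ c).castSucc := by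
  rw [Perm.inv_eq_iff_eq, decomposeLast_symm_apply_castSucc]
  simp

lemma perm_succ_row_last (A : Matrix (Fin (m + 1)) (Fin (m + 1)) ℕ) :
    perm (m + 1) A = ∑ p, A (Fin.last m) p *
      perm m (A.submatrix Fin.castSucc (swap (Fin.last m) p ∘ Fin.castSucc)) := by
  rw [perm, ← decomposeLast.symm.sum_comp, Fintype.sum_prod_type]
  refine Fintype.sum_congr _ _ fun p => ?_
  rw [perm, Finset.mul_sum]
  refine Fintype.sum_congr _ _ fun τ => ?_
  rw [Fin.prod_univ_castSucc, mul_comm]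
  simp

lemma forall_apply_decomposeLast_symm_eq_one (A : Matrix (Fin (m + 1)) (Fin (m + 1)) ℕ)
    (p : Fin (m + 1)) (τ : Perm (Fin m)) :
    (∀ i, A i (decomposeLast.symm (p, τ) i) = 1) ↔ A (Fin.last m) p = 1 ∧
      ∀ j, A j.castSucc (swap (Fin.last m) p (τ j).castSucc) = 1 := by
  rw [Fin.forall_fin_succ', and_comm]
  simp

end Decompose

section UpdateCol

variable {ι R : Type*} [DecidableEq ι]

lemma forall_apply_perm_iff (τ : Perm ι) (c : ι) (P : ι → ι → Prop) :
    (∀ i, P i (τ i)) ↔ (∀ i, τ i ≠ c → P i (τ i)) ∧ P (τ⁻¹ c) c := by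
  refine ⟨fun h => ⟨fun i _ => h i, by simpa using h (τ⁻¹ c)⟩, fun ⟨h, hc⟩ i => ?_⟩
  by_cases hi : τ i = c
  · rw [← Perm.eq_inv_iff_eq] at hi
    simpa [hi] using hc
  · exact h i hi

lemma forall_updateCol_apply_eq_one_iff [One R] (B : Matrix ι ι R) (c : ι) (w : ι → R)
    (σ : Perm ι) :
    (∀ i, B.updateCol c w i (σ i) = 1) ↔ (∀ i, σ i ≠ c → B i (σ i) = 1) ∧ w (σ⁻¹ c) = 1 := by
  rw [forall_apply_perm_iff σ c fun i j => B.updateCol c w i j = 1]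
  refine and_congr (forall_congr' fun i => forall_congr' fun hi => ?_) (by simp)
  rw [Matrix.updateCol_ne hi]

variable [Fintype ι]

lemma prod_updateCol_apply [CommMonoid R] (B : Matrix ι ι R) (c : ι) (w : ι → R)
    (σ : Perm ι) :
    ∏ i, B.updateCol c w i (σ i) = w (σ⁻¹ c) * ∏ i ∈ {σ⁻¹ c}ᶜ, B i (σ i) := by
  rw [Fintype.prod_eq_mul_prod_compl (σ⁻¹ c)]
  congr 1
  · simp
  · refine prod_congr rfl fun i hi => Matrix.updateCol_ne fun h => ?_
    exact (mem_compl.mp hi) (mem_singleton.mpr (Perm.eq_inv_iff_eq.mpr h))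

variable {m : ℕ}

lemma perm_updateCol_add (B : Matrix (Fin m) (Fin m) ℕ) (c : Fin m) (u v : Fin m → ℕ) :
    perm m (B.updateCol c (u + v)) = perm m (B.updateCol c u) + perm m (B.updateCol c v) := by
  simp only [perm, prod_updateCol_apply, Pi.add_apply, add_mul, sum_add_distrib]

lemma perm_updateCol_sup_add_inf (B : Matrix (Fin m) (Fin m) ℕ) (c : Fin m) (u v : Fin m → ℕ) :
    perm m (B.updateCol c (u ⊔ v)) + perm m (B.updateCol c (u ⊓ v)) =
      perm m (B.updateCol c u) + perm m (B.updateCol c v) := by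
  rw [← perm_updateCol_add, ← perm_updateCol_add]
  congr 2
  funext j
  exact max_add_min (u j) (v j)

lemma perm_updateCol_zero (B : Matrix (Fin m) (Fin m) ℕ) (c : Fin m) :
    perm m (B.updateCol c 0) = 0 := by
  simp [perm, prod_updateCol_apply]

end UpdateCol

lemma perm_eq_ncard {m : ℕ} (M : Matrix (Fin m) (Fin m) ℕ)
    (h01 : ∀ i j, M i j = 0 ∨ M i j = 1) :
    perm m M = {σ : Perm (Fin m) | ∀ i, M i (σ i) = 1}.ncard := by
  classical
  rw [Set.ncard_eq_toFinset_card', Set.toFinset_ofPred, card_filter, perm]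
  refine sum_congr rfl fun σ _ => ?_
  split_ifs with h
  · exact prod_eq_one fun i _ => h i
  · push Not at h
    obtain ⟨i, hi⟩ := h
    exact prod_eq_zero (mem_univ i) ((h01 i (σ i)).resolve_right hi)

def truncCol {α : Type*} {m : ℕ} (A : Matrix (Fin (m + 1)) (Fin (m + 1)) α) (c : Fin (m + 1)) :
    Fin m → α :=
  fun j => A j.castSucc c

lemma min_eq_one_iff {a b : ℕ} (ha : a = 0 ∨ a = 1) (hb : b = 0 ∨ b = 1) :
    min a b = 1 ↔ a = 1 ∧ b = 1 := by
  omega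

section LastRow

variable {m : ℕ} (A : Matrix (Fin (m + 1)) (Fin (m + 1)) ℕ) (c : Fin m)

lemma submatrix_swap_castSucc_eq_updateCol :
    A.submatrix Fin.castSucc (swap (Fin.last m) c.castSucc ∘ Fin.castSucc) =
      (A.submatrix Fin.castSucc Fin.castSucc).updateCol c (truncCol A (Fin.last m)) := by
  ext i j
  by_cases hj : j = c
  · subst hj
    simp [truncCol]
  · rw [Matrix.updateCol_ne hj]
    simp [swap_apply_of_ne_of_ne, (Fin.castSucc_lt_last j).ne, hj]

lemma perm_eq_add_of_last_row (hc : A (Fin.last m) c.castSucc = 1)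
    (hl : A (Fin.last m) (Fin.last m) = 1)
    (h0 : ∀ p, p ≠ c.castSucc → p ≠ Fin.last m → A (Fin.last m) p = 0) :
    perm (m + 1) A =
      perm m ((A.submatrix Fin.castSucc Fin.castSucc).updateCol c (truncCol A c.castSucc)) +
      perm m ((A.submatrix Fin.castSucc Fin.castSucc).updateCol c (truncCol A (Fin.last m))) := by
  rw [perm_succ_row_last, Fintype.sum_eq_add (Fin.last m) c.castSucc (Fin.castSucc_lt_last c).ne'
    fun p hp => by rw [h0 p hp.2 hp.1, zero_mul], hc, hl, swap_self,
    submatrix_swap_castSucc_eq_updateCol]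
  simp only [coe_refl, one_mul]
  exact congrArg (· + _) (congrArg (perm m) (Matrix.updateCol_eq_self _ c).symm)

lemma perm_updateCol_sup_add_perm_updateCol_inf (hc : A (Fin.last m) c.castSucc = 1)
    (hl : A (Fin.last m) (Fin.last m) = 1)
    (h0 : ∀ p, p ≠ c.castSucc → p ≠ Fin.last m → A (Fin.last m) p = 0) :
    perm m ((A.submatrix Fin.castSucc Fin.castSucc).updateCol c
        (truncCol A c.castSucc ⊔ truncCol A (Fin.last m))) +
      perm m ((A.submatrix Fin.castSucc Fin.castSucc).updateCol c
        (truncCol A c.castSucc ⊓ truncCol A (Fin.last m))) = perm (m + 1) A := by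
  rw [perm_updateCol_sup_add_inf, perm_eq_add_of_last_row A c hc hl h0]

def Y₃ : Set (Perm (Fin (m + 1))) :=
  {σ | (∀ i, A i (σ i) = 1) ∧
    ((σ (Fin.last m) = c.castSucc ∧ A (σ⁻¹ (Fin.last m)) c.castSucc = 1) ∨
     (σ (Fin.last m) = Fin.last m ∧ A (σ⁻¹ c.castSucc) (Fin.last m) = 1))}

variable {A}

lemma decomposeLast_symm_mem_Y₃_iff (h01 : ∀ i j, A i j = 0 ∨ A i j = 1)
    (hc : A (Fin.last m) c.castSucc = 1) (hl : A (Fin.last m) (Fin.last m) = 1)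
    (p : Fin (m + 1)) (τ : Perm (Fin m)) :
    decomposeLast.symm (p, τ) ∈ Y₃ A c ↔ (p = c.castSucc ∨ p = Fin.last m) ∧
      ∀ j, (A.submatrix Fin.castSucc Fin.castSucc).updateCol c
        (truncCol A c.castSucc ⊓ truncCol A (Fin.last m)) j (τ j) = 1 := by
  have hlc : Fin.last m ≠ c.castSucc := (Fin.castSucc_lt_last c).ne'
  rw [Y₃, Set.mem_ofPred_eq, forall_apply_decomposeLast_symm_eq_one,
    decomposeLast_symm_apply_last, forall_updateCol_apply_eq_one_iff,
    forall_apply_perm_iff τ c fun j i => A j.castSucc (swap (Fin.last m) p i.castSucc) = 1]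
  rcases eq_or_ne p c.castSucc with rfl | hpc
  · have hinv : (decomposeLast.symm (c.castSucc, τ))⁻¹ (Fin.last m) = (τ⁻¹ c).castSucc := by
      simpa using decomposeLast_symm_inv_apply c.castSucc τ c
    simp +contextual only [hc, ne_eq, (Fin.castSucc_lt_last _).ne, not_false_eq_true,
      Fin.castSucc_inj, swap_apply_of_ne_of_ne, Perm.coe_inv, swap_apply_right, true_and, hinv,
      false_and, or_false, Matrix.submatrix_apply, Pi.inf_apply, truncCol, h01,
      min_eq_one_iff]
    tauto
  rcases eq_or_ne p (Fin.last m) with rfl | hpl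
  · have hinv : (decomposeLast.symm (Fin.last m, τ))⁻¹ c.castSucc = (τ⁻¹ c).castSucc := by
      simpa using decomposeLast_symm_inv_apply (Fin.last m) τ c
    simp only [hl, ne_eq, swap_self, refl_apply, Perm.coe_inv, true_and, hlc, false_and, hinv,
      false_or, or_true, Matrix.submatrix_apply, Pi.inf_apply, truncCol, h01, min_eq_one_iff]
    tauto
  · simp [hpc, hpl]

lemma ncard_Y₃ (h01 : ∀ i j, A i j = 0 ∨ A i j = 1)
    (hc : A (Fin.last m) c.castSucc = 1) (hl : A (Fin.last m) (Fin.last m) = 1) :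
    (Y₃ A c).ncard = 2 * perm m ((A.submatrix Fin.castSucc Fin.castSucc).updateCol c
      (truncCol A c.castSucc ⊓ truncCol A (Fin.last m))) := by
  set M := (A.submatrix Fin.castSucc Fin.castSucc).updateCol c
    (truncCol A c.castSucc ⊓ truncCol A (Fin.last m))
  have hM : ∀ i j, M i j = 0 ∨ M i j = 1 := by
    intro i j
    by_cases hj : j = c
    · subst hj
      simp only [M, Matrix.updateCol_self, Pi.inf_apply, truncCol]
      have := h01 i.castSucc j.castSucc
      have := h01 i.castSucc (Fin.last m)
      omega
    · simp only [M, Matrix.updateCol_ne hj]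
      exact h01 _ _
  have hY : Y₃ A c =
      decomposeLast.symm '' ({c.castSucc, Fin.last m} ×ˢ {τ | ∀ j, M j (τ j) = 1}) := by
    ext σ
    obtain ⟨⟨p, τ⟩, rfl⟩ := decomposeLast.symm.surjective σ
    rw [decomposeLast.symm.injective.mem_set_image]
    exact decomposeLast_symm_mem_Y₃_iff c h01 hc hl p τ
  rw [hY, Set.ncard_image_of_injective _ decomposeLast.symm.injective, Set.ncard_prod,
    Set.ncard_pair (Fin.castSucc_lt_last c).ne, perm_eq_ncard M hM]

end LastRow

lemma lastIdx_eq (k : ℕ) (hn : 2 ≤ k + 2) : lastIdx (k + 2) hn = Fin.last (k + 1) := rfl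

lemma sndIdx_eq (k : ℕ) (hn : 2 ≤ k + 2) : sndIdx (k + 2) hn = (Fin.last k).castSucc := rfl

lemma bicontractMatrix_eq_updateCol (k : ℕ) (hn : 2 ≤ k + 2)
    (A : Matrix (Fin (k + 2)) (Fin (k + 2)) ℕ) :
    bicontractMatrix (k + 2) hn A = (A.submatrix Fin.castSucc Fin.castSucc).updateCol (Fin.last k)
      (truncCol A (Fin.last k).castSucc ⊔ truncCol A (Fin.last (k + 1))) := by
  ext j i
  by_cases hi : i = Fin.last k
  · subst hi
    simp only [bicontractMatrix, Nat.add_one_sub_one, Fin.val_last, add_tsub_cancel_right,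
      ↓reduceIte, sndIdx_eq, lastIdx_eq, Matrix.updateCol_self, Pi.sup_apply, truncCol]
    rfl
  · rw [Matrix.updateCol_ne hi]
    have hik : (i : ℕ) ≠ k + 2 - 2 := fun h => hi (Fin.ext (by simpa using h))
    simp only [bicontractMatrix, if_neg hik]
    rfl

/-- With `A′` the bicontraction of `A` at its last row,
`2·perm(A′) = 2·perm(A) − |Y₃|`; in particular, if no row other than the last has a
`1` in both of the last two columns, then `perm(A′) = perm(A)`. -/
theorem statement3 (n : ℕ) (hn : 2 ≤ n) (A : Matrix (Fin n) (Fin n) ℕ)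
    (h01 : ∀ i j, A i j = 0 ∨ A i j = 1)
    (hrow : ∀ j : Fin n, A (lastIdx n hn) j ≠ 0 ↔ (j = sndIdx n hn ∨ j = lastIdx n hn)) :
    (2 * (perm (n-1) (bicontractMatrix n hn A)) : ℤ)
        = 2 * (perm n A : ℤ) -
          (({σ : Equiv.Perm (Fin n) |
            (∀ i, A i (σ i) = 1) ∧
            ((σ (lastIdx n hn) = sndIdx n hn ∧ A (σ⁻¹ (lastIdx n hn)) (sndIdx n hn) = 1) ∨
             (σ (lastIdx n hn) = lastIdx n hn ∧ A (σ⁻¹ (sndIdx n hn)) (lastIdx n hn) = 1))}).ncard : ℤ) ∧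
    ((∀ j : Fin n, j ≠ lastIdx n hn →
        ¬ (A j (sndIdx n hn) = 1 ∧ A j (lastIdx n hn) = 1)) →
      perm (n-1) (bicontractMatrix n hn A) = perm n A) := by
  obtain ⟨k, rfl⟩ : ∃ k, n = k + 2 := ⟨n - 2, by omega⟩
  simp only [lastIdx_eq, sndIdx_eq] at hrow ⊢
  have hs : A (Fin.last (k + 1)) (Fin.last k).castSucc = 1 :=
    (h01 _ _).resolve_left ((hrow _).mpr (Or.inl rfl))
  have hl : A (Fin.last (k + 1)) (Fin.last (k + 1)) = 1 :=
    (h01 _ _).resolve_left ((hrow _).mpr (Or.inr rfl))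
  have h0 : ∀ p, p ≠ (Fin.last k).castSucc → p ≠ Fin.last (k + 1) → A (Fin.last (k + 1)) p = 0 :=
    fun p h1 h2 => not_not.mp fun h => ((hrow p).mp h).elim h1 h2
  have hA : perm (k + 2 - 1) (bicontractMatrix (k + 2) hn A) +
      perm (k + 1) ((A.submatrix Fin.castSucc Fin.castSucc).updateCol (Fin.last k)
        (truncCol A (Fin.last k).castSucc ⊓ truncCol A (Fin.last (k + 1)))) = perm (k + 2) A := by
    rw [bicontractMatrix_eq_updateCol]
    exact perm_updateCol_sup_add_perm_updateCol_inf A (Fin.last k) hs hl h0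
  refine ⟨?_, fun hnone => ?_⟩
  · have hY := ncard_Y₃ (Fin.last k) h01 hs hl
    rw [Y₃] at hY
    rw [hY]
    push_cast
    omega
  · have huv : truncCol A (Fin.last k).castSucc ⊓ truncCol A (Fin.last (k + 1)) = 0 := by
      funext j
      have hj := hnone j.castSucc (Fin.castSucc_lt_last j).ne
      have hjs := h01 j.castSucc (Fin.last k).castSucc
      have hjl := h01 j.castSucc (Fin.last (k + 1))
      simp only [Pi.inf_apply, truncCol, Pi.zero_apply]
      omega
    rw [huv, perm_updateCol_zero] at hA
    omega

end PaperMM
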